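/- Let f : ℝ → ℝ be a returning function with closed graph whose set C(f) of continuity points is not all of ℝ. Then any two distinct connected components of C(f) have disjoint closures in ℝ. -/

import Mathlib

/-!
A closed graph makes preimages of compact sets closed, so `f` is continuous wherever it is
locally bounded. If two distinct components of `C(f)` had a common closure point `p`, then
`p ∉ C(f)` and, the components being intervals, they would lie on opposite sides of `p`: `p` would
be an isolated discontinuity. But `|f|` is bounded on each side of `p`. If `|f t| → ∞` as `t → p⁻`,
let `c < p` be the last point before `p` at which `|f|` is at most a given large value; every point
of `(c, p)` then has `|f|` larger than `|f c|`, which contradicts returning at `p` for `C = [c, p]`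
and `y = c`. Otherwise `|f|` keeps coming back below some level, and if it were unbounded it would,
by the intermediate value theorem, take a fixed large value `R > |f p|` arbitrarily close to `p`;
the closed graph would then force `|f p| = R`. The right side follows by the reflection `t ↦ -t`.
-/

/-- A function `f : X → ℝ` is *returning* if for every point `x` there is a positive
real `M` such that for every path-connected subset `C ⊆ X` containing `x` and every
`y ∈ C \ {x}` there exists `z ∈ C \ {x, y}` with `|f z| ≤ max M |f y|`. -/
def Returning {X : Type*} [TopologicalSpace X] (f : X → ℝ) : Prop :=
  ∀ x : X, ∃ M : ℝ, 0 < M ∧ ∀ C : Set X, IsPathConnected C → x ∈ C →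
    ∀ y ∈ C \ {x}, ∃ z ∈ C \ ({x, y} : Set X), |f z| ≤ max M |f y|

open Set Filter Topology

section ClosedGraph

variable {X Y : Type*} [TopologicalSpace X] [TopologicalSpace Y] {f : X → Y}

lemma isClosed_preimage_of_isClosed_graph (hgr : IsClosed {p : X × Y | p.2 = f p.1})
    {K : Set Y} (hK : IsCompact K) : IsClosed (f ⁻¹' K) := by
  refine isOpen_compl_iff.1 (isOpen_iff_mem_nhds.2 fun x₀ hx₀ => ?_)
  have hoff : ∀ y ∈ K, ∀ᶠ q : X × Y in 𝓝 (x₀, y), q.2 ≠ f q.1 := fun y hy =>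
    hgr.isOpen_compl.mem_nhds fun h => hx₀ (show f x₀ ∈ K from h ▸ hy)
  filter_upwards [hK.eventually_forall_of_forall_eventually (P := fun x y => y ≠ f x) hoff]
    with x hx hxK
  exact hx _ hxK rfl

lemma continuousAt_of_isClosed_graph (hgr : IsClosed {p : X × Y | p.2 = f p.1})
    {K : Set Y} (hK : IsCompact K) {x₀ : X} (hfK : ∀ᶠ x in 𝓝 x₀, f x ∈ K) :
    ContinuousAt f x₀ := by
  refine tendsto_nhds.2 fun V hV hx₀V => ?_
  have hout : (f ⁻¹' (K \ V))ᶜ ∈ 𝓝 x₀ :=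
    (isClosed_preimage_of_isClosed_graph hgr (hK.diff hV)).isOpen_compl.mem_nhds
      fun h => h.2 hx₀V
  filter_upwards [hfK, hout] with x hxK hx
  by_contra hxV
  exact hx ⟨hxK, hxV⟩

end ClosedGraph

lemma Returning.comp_homeomorph {X Y : Type*} [TopologicalSpace X] [TopologicalSpace Y]
    {f : Y → ℝ} (hf : Returning f) (e : X ≃ₜ Y) : Returning (f ∘ e) := by
  intro x
  obtain ⟨M, hM, hret⟩ := hf (e x)
  refine ⟨M, hM, fun C hC hxC y hy => ?_⟩
  obtain ⟨_, ⟨⟨z, hzC, rfl⟩, hz⟩, hle⟩ := hret (e '' C) (hC.image e.continuous)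
    (mem_image_of_mem e hxC) (e y) ⟨mem_image_of_mem e hy.1, fun h => hy.2 (e.injective h)⟩
  refine ⟨z, ⟨hzC, fun h => hz ?_⟩, hle⟩
  rcases h with rfl | rfl <;> simp

lemma isClosed_graph_comp_homeomorph {X Y Z : Type*} [TopologicalSpace X] [TopologicalSpace Y]
    [TopologicalSpace Z] {f : Y → Z} (hgr : IsClosed {p : Y × Z | p.2 = f p.1}) (e : X ≃ₜ Y) :
    IsClosed {p : X × Z | p.2 = (f ∘ e) p.1} :=
  hgr.preimage ((e.continuous.comp continuous_fst).prodMk continuous_snd)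

section Order

variable {α : Type*} [LinearOrder α] [TopologicalSpace α] [OrderTopology α]

lemma Set.OrdConnected.mem_nhdsLT_or_mem_nhdsGT {s : Set α} (hs : s.OrdConnected) {p : α}
    (hp : p ∈ closure s) (hps : p ∉ s) : s ∈ 𝓝[<] p ∨ s ∈ 𝓝[>] p := by
  obtain ⟨u, hu⟩ := closure_nonempty_iff.1 ⟨p, hp⟩
  rcases lt_or_gt_of_ne (ne_of_mem_of_not_mem hu hps) with hup | hpu
  · refine Or.inl (mem_of_superset (Ioo_mem_nhdsLT hup) fun t ht => ?_)
    obtain ⟨w, hwt, hws⟩ := mem_closure_iff.1 hp (Ioi t) isOpen_Ioi ht.2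
    exact hs.out hu hws ⟨ht.1.le, le_of_lt hwt⟩
  · refine Or.inr (mem_of_superset (Ioo_mem_nhdsGT hpu) fun t ht => ?_)
    obtain ⟨w, hwt, hws⟩ := mem_closure_iff.1 hp (Iio t) isOpen_Iio ht.1
    exact hs.out hws hu ⟨le_of_lt hwt, ht.2.le⟩

end Order

lemma connectedComponentIn_eq_of_mem_closure {X : Type*} [TopologicalSpace X] {S : Set X}
    {x p : X} (hpS : p ∈ S) (hp : p ∈ closure (connectedComponentIn S x)) :
    connectedComponentIn S x = connectedComponentIn S p := by
  obtain ⟨q, hq⟩ := closure_nonempty_iff.1 ⟨p, hp⟩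
  rw [connectedComponentIn_eq hq] at hp ⊢
  have hpre : IsPreconnected (insert p (connectedComponentIn S q)) :=
    isPreconnected_connectedComponentIn.subset_closure (subset_insert _ _)
      (insert_subset hp subset_closure)
  have hsub := hpre.subset_connectedComponentIn
    (mem_insert_of_mem _ (mem_connectedComponentIn (connectedComponentIn_subset _ _ hq)))
    (insert_subset hpS (connectedComponentIn_subset _ _))
  exact connectedComponentIn_eq (hsub (mem_insert _ _))

lemma disjoint_connectedComponentIn {X : Type*} [TopologicalSpace X] {S : Set X} {x y : X}
    (hxy : connectedComponentIn S x ≠ connectedComponentIn S y) :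
    Disjoint (connectedComponentIn S x) (connectedComponentIn S y) :=
  disjoint_left.2 fun _ htx hty =>
    hxy ((connectedComponentIn_eq htx).trans (connectedComponentIn_eq hty).symm)

lemma eventually_nhdsNE_mem_of_mem_closure_connectedComponentIn {α : Type*} [LinearOrder α]
    [TopologicalSpace α] [OrderTopology α] [DenselyOrdered α] [NoMinOrder α] [NoMaxOrder α]
    {S : Set α} {x y p : α} (hxy : connectedComponentIn S x ≠ connectedComponentIn S y)
    (hpx : p ∈ closure (connectedComponentIn S x))
    (hpy : p ∈ closure (connectedComponentIn S y)) :
    p ∉ S ∧ ∀ᶠ t in 𝓝[≠] p, t ∈ S := by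
  have hpS : p ∉ S := fun hpS => hxy ((connectedComponentIn_eq_of_mem_closure hpS hpx).trans
    (connectedComponentIn_eq_of_mem_closure hpS hpy).symm)
  have hside : ∀ z, p ∈ closure (connectedComponentIn S z) →
      connectedComponentIn S z ∈ 𝓝[<] p ∨ connectedComponentIn S z ∈ 𝓝[>] p := fun z hz =>
    isPreconnected_connectedComponentIn.ordConnected.mem_nhdsLT_or_mem_nhdsGT hz
      fun h => hpS (connectedComponentIn_subset _ _ h)
  have hmeet : ∀ {l : Filter α} [l.NeBot], connectedComponentIn S x ∈ l →
      connectedComponentIn S y ∉ l := fun hx hy =>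
    (Filter.nonempty_of_mem (inter_mem hx hy)).ne_empty
      (disjoint_connectedComponentIn hxy).inter_eq
  refine ⟨hpS, ?_⟩
  rw [← nhdsLT_sup_nhdsGT, eventually_sup]
  rcases hside x hpx with hx | hx <;> rcases hside y hpy with hy | hy
  · exact absurd hy (hmeet hx)
  · exact ⟨mem_of_superset hx (connectedComponentIn_subset _ _),
      mem_of_superset hy (connectedComponentIn_subset _ _)⟩
  · exact ⟨mem_of_superset hy (connectedComponentIn_subset _ _),
      mem_of_superset hx (connectedComponentIn_subset _ _)⟩
  · exact absurd hy (hmeet hx)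

section IntervalLeft

variable {α δ : Type*} [ConditionallyCompleteLinearOrder α] [TopologicalSpace α]
  [OrderTopology α] [NoMinOrder α] [LinearOrder δ] [TopologicalSpace δ] [OrderClosedTopology δ]
  {g : α → δ} {p : α}

lemma frequently_eq_of_frequently_le_of_frequently_ge [DenselyOrdered α] {a : δ}
    (hcont : ∀ᶠ t in 𝓝[<] p, ContinuousAt g t) (hle : ∃ᶠ t in 𝓝[<] p, g t ≤ a)
    (hge : ∃ᶠ t in 𝓝[<] p, a ≤ g t) : ∃ᶠ t in 𝓝[<] p, g t = a := by
  refine frequently_iff.2 fun {U} hU => ?_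
  obtain ⟨l, hlp, hsub⟩ := mem_nhdsLT_iff_exists_Ioo_subset.1 (inter_mem hU hcont)
  obtain ⟨t₁, h₁, ht₁⟩ := (hle.and_eventually (Ioo_mem_nhdsLT hlp)).exists
  obtain ⟨t₂, h₂, ht₂⟩ := (hge.and_eventually (Ioo_mem_nhdsLT hlp)).exists
  have huIcc : uIcc t₁ t₂ ⊆ Ioo l p := ordConnected_Ioo.uIcc_subset ht₁ ht₂
  obtain ⟨t, ht, hta⟩ := intermediate_value_uIcc
    (fun t ht => (hsub (huIcc ht)).2.continuousWithinAt) (mem_uIcc_of_le h₁ h₂)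
  exact ⟨t, (hsub (huIcc ht)).1, hta⟩

lemma exists_forall_lt_of_tendsto_nhdsLT_atTop [NoMaxOrder δ] {d : α} (hdp : d < p)
    (hcont : ∀ t ∈ Ico d p, ContinuousAt g t) (htend : Tendsto g (𝓝[<] p) atTop) :
    ∃ c ∈ Ico d p, g c ≤ g d ∧ ∀ t ∈ Ioo c p, g d < g t := by
  obtain ⟨b, hbp, hb⟩ := mem_nhdsLT_iff_exists_Ioo_subset.1 (htend.eventually_gt_atTop (g d))
  have hep : max b d < p := max_lt hbp hdp
  set A := Icc d (max b d) ∩ g ⁻¹' Iic (g d)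
  have hA : IsClosed A := ContinuousOn.preimage_isClosed_of_isClosed
    (fun t ht => (hcont t ⟨ht.1, ht.2.trans_lt hep⟩).continuousWithinAt) isClosed_Icc isClosed_Iic
  have hAbdd : BddAbove A := bddAbove_Icc.mono inter_subset_left
  have hcA : sSup A ∈ A :=
    hA.csSup_mem ⟨d, left_mem_Icc.2 (le_max_right b d), le_rfl⟩ hAbdd
  refine ⟨sSup A, ⟨hcA.1.1, hcA.1.2.trans_lt hep⟩, hcA.2, fun t ht => ?_⟩
  rcases le_or_gt t (max b d) with hte | hte
  · exact not_le.1 fun h => notMem_of_csSup_lt ht.1 hAbdd ⟨⟨hcA.1.1.trans ht.1.le, hte⟩, h⟩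
  · exact hb ⟨(le_max_left b d).trans_lt hte, ht.2⟩

end IntervalLeft

section RealFunction

variable {f : ℝ → ℝ} {p : ℝ}

lemma exists_eventually_abs_le_nhdsLT_of_not_tendsto_atTop
    (hgr : IsClosed {q : ℝ × ℝ | q.2 = f q.1}) (hcont : ∀ᶠ t in 𝓝[<] p, ContinuousAt f t)
    (hf : ¬Tendsto (fun t => |f t|) (𝓝[<] p) atTop) :
    ∃ K, ∀ᶠ t in 𝓝[<] p, |f t| ≤ K := by
  obtain ⟨K, hK⟩ : ∃ K, ∃ᶠ t in 𝓝[<] p, |f t| < K := by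
    simpa [tendsto_atTop, not_le] using hf
  set R := max K |f p| + 1
  refine ⟨R, ?_⟩
  by_contra hR
  have hfreq : ∃ᶠ t in 𝓝[<] p, |f t| = R :=
    frequently_eq_of_frequently_le_of_frequently_ge (hcont.mono fun t ht => ht.abs)
      (hK.mono fun t ht => by linarith [le_max_left K |f p|])
      ((not_eventually.1 hR).mono fun t ht => (not_le.1 ht).le)
  have hclosed : IsClosed (f ⁻¹' Metric.sphere 0 R) :=
    isClosed_preimage_of_isClosed_graph hgr (isCompact_sphere 0 R)
  have hpR : f p ∈ Metric.sphere 0 R := hclosed.closure_subset <|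
    mem_closure_iff_frequently.2 <| (hfreq.filter_mono nhdsWithin_le_nhds).mono fun t ht => by
      simpa using ht
  have : |f p| = R := by simpa using hpR
  linarith [le_max_right K |f p|]

lemma Returning.not_tendsto_abs_nhdsLT_atTop (hret : Returning f)
    (hcont : ∀ᶠ t in 𝓝[<] p, ContinuousAt f t) : ¬Tendsto (fun t => |f t|) (𝓝[<] p) atTop := by
  intro htend
  obtain ⟨M, -, hM⟩ := hret p
  obtain ⟨a, hap : a < p, ha⟩ :=
    mem_nhdsLT_iff_exists_Ioo_subset.1 (hcont.and (htend.eventually_ge_atTop M))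
  obtain ⟨d, had, hdp⟩ := exists_between hap
  obtain ⟨c, hc, hcd, hgt⟩ := exists_forall_lt_of_tendsto_nhdsLT_atTop hdp
    (fun t ht => (ha ⟨had.trans_le ht.1, ht.2⟩).1.abs) htend
  have hcp : c < p := hc.2
  obtain ⟨z, ⟨hz, hzne⟩, hzle⟩ := hM (Icc c p)
    ((convex_Icc c p).isPathConnected (nonempty_Icc.2 hcp.le)) (right_mem_Icc.2 hcp.le) c
    ⟨left_mem_Icc.2 hcp.le, hcp.ne⟩
  have hzc : c < z := lt_of_le_of_ne hz.1 fun h => hzne (by simp [h])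
  have hzp : z < p := lt_of_le_of_ne hz.2 fun h => hzne (by simp [h])
  have hMc : M ≤ |f c| := (ha ⟨had.trans_le hc.1, hcp⟩).2
  rw [max_eq_right hMc] at hzle
  linarith [hgt z ⟨hzc, hzp⟩]

lemma Returning.exists_eventually_abs_le_nhdsLT (hret : Returning f)
    (hgr : IsClosed {q : ℝ × ℝ | q.2 = f q.1}) (hcont : ∀ᶠ t in 𝓝[<] p, ContinuousAt f t) :
    ∃ K, ∀ᶠ t in 𝓝[<] p, |f t| ≤ K :=
  exists_eventually_abs_le_nhdsLT_of_not_tendsto_atTop hgr hcont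
    (hret.not_tendsto_abs_nhdsLT_atTop hcont)

lemma Returning.exists_eventually_abs_le_nhdsGT (hret : Returning f)
    (hgr : IsClosed {q : ℝ × ℝ | q.2 = f q.1}) (hcont : ∀ᶠ t in 𝓝[>] p, ContinuousAt f t) :
    ∃ K, ∀ᶠ t in 𝓝[>] p, |f t| ≤ K := by
  let e := Homeomorph.neg ℝ
  have hcont' : ∀ᶠ t in 𝓝[<] (-p), ContinuousAt (f ∘ e) t :=
    tendsto_neg_nhdsLT_neg.eventually hcont |>.mono fun t ht =>
      (e.comp_continuousAt_iff' f t).2 ht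
  obtain ⟨K, hK⟩ := (hret.comp_homeomorph e).exists_eventually_abs_le_nhdsLT
    (isClosed_graph_comp_homeomorph hgr e) hcont'
  exact ⟨K, tendsto_neg_nhdsGT.eventually hK |>.mono fun t ht => by simpa [e] using ht⟩

theorem Returning.continuousAt_of_eventually_continuousAt (hret : Returning f)
    (hgr : IsClosed {q : ℝ × ℝ | q.2 = f q.1}) (hcont : ∀ᶠ t in 𝓝[≠] p, ContinuousAt f t) :
    ContinuousAt f p := by
  rw [← nhdsLT_sup_nhdsGT, eventually_sup] at hcont
  obtain ⟨K₁, hK₁⟩ := hret.exists_eventually_abs_le_nhdsLT hgr hcont.1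
  obtain ⟨K₂, hK₂⟩ := hret.exists_eventually_abs_le_nhdsGT hgr hcont.2
  set R := max (max K₁ K₂) |f p|
  have hbound : ∀ᶠ t in 𝓝 p, |f t| ≤ R := by
    rw [← nhdsNE_sup_pure, ← nhdsLT_sup_nhdsGT, eventually_sup, eventually_sup,
      eventually_pure]
    exact ⟨⟨hK₁.mono fun t ht => by simp [R, ht], hK₂.mono fun t ht => by simp [R, ht]⟩,
      le_max_right _ _⟩
  exact continuousAt_of_isClosed_graph hgr isCompact_Icc (hbound.mono fun t ht => abs_le.1 ht)

end RealFunction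

theorem stmt_6_general (f : ℝ → ℝ) (hret : Returning f)
    (hgr : IsClosed {p : ℝ × ℝ | p.2 = f p.1})
    (x y : ℝ)
    (hxy : connectedComponentIn {z : ℝ | ContinuousAt f z} x ≠
           connectedComponentIn {z : ℝ | ContinuousAt f z} y) :
    Disjoint (closure (connectedComponentIn {z : ℝ | ContinuousAt f z} x))
             (closure (connectedComponentIn {z : ℝ | ContinuousAt f z} y)) := by
  refine disjoint_left.2 fun p hpx hpy => ?_
  obtain ⟨hp, hnear⟩ := eventually_nhdsNE_mem_of_mem_closure_connectedComponentIn hxy hpx hpy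
  exact hp (hret.continuousAt_of_eventually_continuousAt hgr hnear)

theorem stmt_6 (f : ℝ → ℝ) (hret : Returning f)
    (hgr : IsClosed {p : ℝ × ℝ | p.2 = f p.1})
    (hne : {x : ℝ | ContinuousAt f x} ≠ Set.univ)
    (x y : ℝ) (hx : ContinuousAt f x) (hy : ContinuousAt f y)
    (hxy : connectedComponentIn {z : ℝ | ContinuousAt f z} x ≠
           connectedComponentIn {z : ℝ | ContinuousAt f z} y) :
    Disjoint (closure (connectedComponentIn {z : ℝ | ContinuousAt f z} x))
             (closure (connectedComponentIn {z : ℝ | ContinuousAt f z} y)) :=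
  stmt_6_general f hret hgr x y hxy
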